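/- Let H be a division ring, k a field contained in the center of H, and (G_n, s_n)_{n ∈ ℕ} a complete system of finite groups. Let (L_n)_{n ∈ ℕ} be an increasing tower of finite Galois extensions of k, with isomorphisms ε_n : G_n ≅ Gal(L_n/k) satisfying ε_n ∘ s_{n+1} = res ∘ ε_{n+1} for all n, and set L = ⋃_n L_n. Assume that H ⊗_k L_n is a division ring for every n. Then M = H ⊗_k L is a division ring, and the group of ring automorphisms of M fixing H ⊗ 1 pointwise is isomorphic to the inverse limit lim← G_n of the system (G_n, s_n). -/

import Mathlib

/-!
Every element of `H ⊗ L` already lies in the image of some `H ⊗ Lₙ`, so its nonzero elements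
are units. An automorphism `η` of `M = H ⊗ L` fixing `H ⊗ 1` fixes `k`, so it sends `1 ⊗ b` to a
root of the minimal polynomial of `b` over `k`. Since `L/k` is normal this polynomial is a product
of linear factors over `L`, and `L` is central in the domain `M`, so the root is some `1 ⊗ b'`:
thus `η = id ⊗ σ` for a unique `σ ∈ Gal(L/k)`. Finally, `L` is the directed union of the `Lₙ`,
so restriction identifies `Gal(L/k)` with the inverse limit of the `Gal(Lₙ/k)`, and the `εₙ`
identify that system with `(Gₙ, sₙ)`.
-/

open scoped TensorProduct

set_option synthInstance.maxHeartbeats 400000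
set_option maxHeartbeats 1000000

/-- The inverse (projective) limit of a complete system of groups `(Gₙ, sₙ)`, realized as the
subgroup of the product `Π n, Gₙ` consisting of the compatible sequences. -/
def inverseLimit (G : ℕ → Type*) [∀ n, Group (G n)] (s : ∀ n, G (n + 1) →* G n) :
    Subgroup (∀ n, G n) where
  carrier := {f | ∀ n, s n (f (n + 1)) = f n}
  one_mem' := by intro n; simp
  mul_mem' := by intro a b ha hb n; simp [ha n, hb n]
  inv_mem' := by intro a ha n; simp [ha n]

/-- The group of ring automorphisms of a ring `M` fixing pointwise the image of a ring
homomorphism `i : K →+* M`. -/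
def fixingAutGroup {K M : Type*} [Ring K] [Ring M] (i : K →+* M) : Subgroup (RingAut M) where
  carrier := {η | ∀ h : K, η (i h) = i h}
  one_mem' := fun _ => rfl
  mul_mem' := fun {a b} ha hb h => by
    show a (b (i h)) = i h
    rw [hb h, ha h]
  inv_mem' := fun {a} ha h => by
    show a⁻¹ (i h) = i h
    conv_lhs => rw [← ha h]
    exact a.symm_apply_apply (i h)

theorem mem_inverseLimit {G : ℕ → Type*} [∀ n, Group (G n)] {s : ∀ n, G (n + 1) →* G n}
    {f : ∀ n, G n} : f ∈ inverseLimit G s ↔ ∀ n, s n (f (n + 1)) = f n := Iff.rfl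

def inverseLimitCongr {G G' : ℕ → Type*} [∀ n, Group (G n)] [∀ n, Group (G' n)]
    {s : ∀ n, G (n + 1) →* G n} {s' : ∀ n, G' (n + 1) →* G' n} (e : ∀ n, G n ≃* G' n)
    (he : ∀ n g, e n (s n g) = s' n (e (n + 1) g)) : inverseLimit G s ≃* inverseLimit G' s' where
  toFun f := ⟨fun n => e n (f.1 n), fun n => by rw [← he, f.2 n]⟩
  invFun f := ⟨fun n => (e n).symm (f.1 n), fun n => by
    rw [MulEquiv.eq_symm_apply, he, MulEquiv.apply_symm_apply, f.2 n]⟩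
  left_inv f := by ext; simp
  right_inv f := by ext; simp
  map_mul' f g := by ext; simp

theorem IsDomain.of_isUnit_of_ne_zero {R : Type*} [Ring R] [Nontrivial R]
    (h : ∀ x : R, x ≠ 0 → IsUnit x) : IsDomain R :=
  have : NoZeroDivisors R :=
    ⟨fun {a _} hab => or_iff_not_imp_left.mpr fun ha => (h a ha).mul_right_eq_zero.mp hab⟩
  NoZeroDivisors.to_isDomain R

open Polynomial in
theorem Polynomial.Splits.mem_range_algebraMap_of_aeval_eq_zero {L M : Type*} [Field L] [Ring M]
    [IsDomain M] [Algebra L M] {p : L[X]} (hp : p.Splits) (hp0 : p ≠ 0) {y : M}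
    (hy : aeval y p = 0) : y ∈ Set.range (algebraMap L M) := by
  induction hp using Submonoid.closure_induction with
  | mem q hq =>
    obtain ⟨r, rfl⟩ | ⟨a, rfl⟩ := hq
    · rw [aeval_C] at hy
      exact absurd ((map_eq_zero_iff _ (algebraMap L M).injective).mp hy) (by simpa using hp0)
    · exact ⟨-a, by rw [map_add, aeval_X, aeval_C, add_eq_zero_iff_eq_neg] at hy; simp [hy]⟩
  | one => simp at hy
  | mul q r _ _ hq hr =>
    rw [map_mul, mul_eq_zero] at hy
    exact hy.elim (hq (left_ne_zero_of_mul hp0)) (hr (right_ne_zero_of_mul hp0))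

open Polynomial in
theorem Normal.algHom_apply_mem_range_algebraMap {k L M : Type*} [Field k] [Field L]
    [Algebra k L] [Normal k L] [Ring M] [IsDomain M] [Algebra k M] [Algebra L M]
    [IsScalarTower k L M] (f : L →ₐ[k] M) (b : L) : f b ∈ Set.range (algebraMap L M) := by
  refine (Normal.splits ‹_› b).mem_range_algebraMap_of_aeval_eq_zero
    (map_ne_zero (minpoly.ne_zero (Algebra.IsIntegral.isIntegral b))) ?_
  rw [aeval_map_algebraMap, aeval_algHom_apply, minpoly.aeval, map_zero]

section TensorAut

variable {k A B : Type*} [CommRing k] [Ring A] [Algebra k A] [CommRing B] [Algebra k B]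

noncomputable def tensorAutHom :
    (B ≃ₐ[k] B) →* fixingAutGroup (Algebra.TensorProduct.includeLeftRingHom : A →+* A ⊗[k] B) where
  toFun σ := ⟨(Algebra.TensorProduct.congr (AlgEquiv.refl : A ≃ₐ[k] A) σ).toRingEquiv,
    fun a => by simp⟩
  map_one' := Subtype.ext <| congrArg AlgEquiv.toRingEquiv Algebra.TensorProduct.congr_refl
  map_mul' σ τ := Subtype.ext <| congrArg AlgEquiv.toRingEquiv <|
    Algebra.TensorProduct.congr_trans .refl .refl τ σ

theorem tensorAutHom_apply_tmul (σ : B ≃ₐ[k] B) (a : A) (b : B) :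
    (tensorAutHom (A := A) σ).1 (a ⊗ₜ b) = a ⊗ₜ σ b := rfl

end TensorAut

section TensorAutOfDomain

variable {k A L : Type*} [Field k] [Ring A] [Algebra k A] [Field L] [Algebra k L]
  [IsDomain (A ⊗[k] L)]

theorem tensorAutHom_injective :
    Function.Injective (tensorAutHom : (L ≃ₐ[k] L) →* fixingAutGroup
      (Algebra.TensorProduct.includeLeftRingHom : A →+* A ⊗[k] L)) := by
  intro σ τ h
  ext b
  apply (Algebra.TensorProduct.includeRight (R := k) (A := A) (B := L)).toRingHom.injective
  simpa [tensorAutHom_apply_tmul] using congr(($h).1 ((1 : A) ⊗ₜ[k] b))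

attribute [local instance] Algebra.TensorProduct.rightAlgebra in
theorem tensorAutHom_surjective [Normal k L] :
    Function.Surjective (tensorAutHom : (L ≃ₐ[k] L) →* fixingAutGroup
      (Algebra.TensorProduct.includeLeftRingHom : A →+* A ⊗[k] L)) := by
  rintro ⟨η, hη⟩
  let ηₐ : A ⊗[k] L ≃ₐ[k] A ⊗[k] L := AlgEquiv.ofRingEquiv (f := η) fun c => hη _
  let ι : L →ₐ[k] A ⊗[k] L := Algebra.TensorProduct.includeRight
  let f : L →ₐ[k] A ⊗[k] L := ηₐ.toAlgHom.comp ι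
  -- for the right `L`-algebra structure on `A ⊗ L`, `algebraMap L (A ⊗ L)` is `ι`
  have hf : ∀ b, f b ∈ ι.range := Normal.algHom_apply_mem_range_algebraMap f
  let e := AlgEquiv.ofInjective ι ι.toRingHom.injective
  let F : L →ₐ[k] L := e.symm.toAlgHom.comp (f.codRestrict _ hf)
  have hF b : (1 : A) ⊗ₜ[k] F b = η (1 ⊗ₜ b) :=
    congrArg Subtype.val (e.apply_symm_apply ⟨f b, hf b⟩)
  refine ⟨AlgEquiv.ofBijective F F.normal_bijective, Subtype.ext <| RingEquiv.ext fun x => ?_⟩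
  change Algebra.TensorProduct.congr .refl _ x = ηₐ x
  congr 1
  refine AlgEquiv.coe_toAlgHom_injective (Algebra.TensorProduct.ext' fun a b => ?_)
  have hsplit : a ⊗ₜ[k] b = (a ⊗ₜ 1) * (1 ⊗ₜ b : A ⊗[k] L) := by
    rw [Algebra.TensorProduct.tmul_mul_tmul, mul_one, one_mul]
  change a ⊗ₜ F b = η (a ⊗ₜ b)
  rw [hsplit, map_mul, ← hF, show η (a ⊗ₜ 1) = a ⊗ₜ 1 from hη a,
    Algebra.TensorProduct.tmul_mul_tmul, mul_one, one_mul]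

noncomputable def tensorAutEquiv [Normal k L] :
    (L ≃ₐ[k] L) ≃* fixingAutGroup (Algebra.TensorProduct.includeLeftRingHom : A →+* A ⊗[k] L) :=
  .ofBijective tensorAutHom ⟨tensorAutHom_injective, tensorAutHom_surjective⟩

end TensorAutOfDomain

namespace IntermediateField

variable {k Ω : Type*} [Field k] [Field Ω] [Algebra k Ω]

noncomputable def restrictAlgEquivHom {E F : IntermediateField k Ω} (h : E ≤ F) [Normal k E] :
    (F ≃ₐ[k] F) →* (E ≃ₐ[k] E) :=
  letI : Algebra E F := (inclusion h).toAlgebra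
  haveI : IsScalarTower k E F := .of_algebraMap_eq fun _ => rfl
  AlgEquiv.restrictNormalHom E

theorem coe_restrictAlgEquivHom_apply {E F : IntermediateField k Ω} (h : E ≤ F) [Normal k E]
    (σ : F ≃ₐ[k] F) (x : E) : (restrictAlgEquivHom h σ x : Ω) = σ (inclusion h x) := by
  let _ : Algebra E F := (inclusion h).toAlgebra
  have _ : IsScalarTower k E F := .of_algebraMap_eq fun _ => rfl
  exact congrArg Subtype.val (AlgEquiv.restrictNormal_commutes σ E x)

theorem restrictAlgEquivHom_restrictAlgEquivHom {E F K : IntermediateField k Ω} (hEF : E ≤ F)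
    (hFK : F ≤ K) [Normal k E] [Normal k F] (σ : K ≃ₐ[k] K) :
    restrictAlgEquivHom hEF (restrictAlgEquivHom hFK σ) =
      restrictAlgEquivHom (hEF.trans hFK) σ := by
  ext x
  simp only [coe_restrictAlgEquivHom_apply]
  rfl

section Directed

variable {ι : Type*} [Nonempty ι] {t : ι → IntermediateField k Ω}

theorem mem_iSup_of_directed (dir : Directed (· ≤ ·) t) {x : Ω} :
    x ∈ ⨆ i, t i ↔ ∃ i, x ∈ t i := by
  rw [← SetLike.mem_coe, coe_iSup_of_directed dir, Set.mem_iUnion]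
  rfl

theorem exists_map_inclusion_eq_of_directed {A : Type*} [Ring A] [Algebra k A]
    (dir : Directed (· ≤ ·) t) (x : A ⊗[k] ↥(⨆ i, t i)) :
    ∃ i, ∃ y : A ⊗[k] t i, Algebra.TensorProduct.map (.id k A) (inclusion (le_iSup t i)) y = x := by
  let φ i := (Algebra.TensorProduct.map (.id k A) (inclusion (le_iSup t i))).toLinearMap
  have hφ i j (h : t i ≤ t j) : LinearMap.range (φ i) ≤ LinearMap.range (φ j) := by
    rintro _ ⟨y, rfl⟩
    refine ⟨Algebra.TensorProduct.map (.id k A) (inclusion h) y, ?_⟩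
    induction y using TensorProduct.induction_on with
    | zero => simp
    | tmul a b => rfl
    | add y z hy hz => simp only [map_add, hy, hz]
  have hdir : Directed (· ≤ ·) fun i => LinearMap.range (φ i) := fun i j =>
    let ⟨l, hil, hjl⟩ := dir i j
    ⟨l, hφ i l hil, hφ j l hjl⟩
  have hx : x ∈ ⨆ i, LinearMap.range (φ i) := by
    induction x using TensorProduct.induction_on with
    | zero => exact zero_mem _
    | tmul a b =>
      obtain ⟨i, hb⟩ := (mem_iSup_of_directed dir).mp b.2
      exact Submodule.mem_iSup_of_mem i ⟨a ⊗ₜ ⟨b, hb⟩, rfl⟩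
    | add y z hy hz => exact add_mem hy hz
  obtain ⟨i, y, hy⟩ := (Submodule.mem_iSup_of_directed _ hdir).mp hx
  exact ⟨i, y, hy⟩

theorem isUnit_tensor_iSup_of_directed {A : Type*} [Ring A] [Algebra k A]
    (dir : Directed (· ≤ ·) t) (h : ∀ i, ∀ x : A ⊗[k] t i, x ≠ 0 → IsUnit x)
    (x : A ⊗[k] ↥(⨆ i, t i)) (hx : x ≠ 0) : IsUnit x := by
  obtain ⟨i, y, rfl⟩ := exists_map_inclusion_eq_of_directed dir x
  exact (h i y (by rintro rfl; simp at hx)).map _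

variable [∀ i, Normal k (t i)]

theorem algEquiv_ext_of_directed (dir : Directed (· ≤ ·) t)
    {σ τ : ↥(⨆ i, t i) ≃ₐ[k] ↥(⨆ i, t i)}
    (h : ∀ i, restrictAlgEquivHom (le_iSup t i) σ = restrictAlgEquivHom (le_iSup t i) τ) :
    σ = τ := by
  ext ⟨x, hx⟩
  obtain ⟨i, hi⟩ := (mem_iSup_of_directed dir).mp hx
  have := congr(($(h i) ⟨x, hi⟩ : Ω))
  simp only [coe_restrictAlgEquivHom_apply] at this
  exact this

theorem exists_restrictAlgEquivHom_eq_of_directed (dir : Directed (· ≤ ·) t)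
    (τ : ∀ i, t i ≃ₐ[k] t i)
    (hτ : ∀ i j x (hi : x ∈ t i) (hj : x ∈ t j), (τ i ⟨x, hi⟩ : Ω) = τ j ⟨x, hj⟩) :
    ∃ σ : ↥(⨆ i, t i) ≃ₐ[k] ↥(⨆ i, t i), ∀ i, restrictAlgEquivHom (le_iSup t i) σ = τ i := by
  let f i : (t i).toSubalgebra →ₐ[k] ↥(⨆ i, t i) := (inclusion (le_iSup t i)).comp (τ i)
  have hf i j (h : (t i).toSubalgebra ≤ (t j).toSubalgebra) :
      f i = (f j).comp (Subalgebra.inclusion h) := by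
    ext ⟨x, hx⟩
    exact hτ i j x hx (h hx)
  let σ₀ : ↥(⨆ i, t i) →ₐ[k] ↥(⨆ i, t i) :=
    Subalgebra.iSupLift _ dir f hf _ (toSubalgebra_iSup_of_directed dir).le
  refine ⟨.ofBijective σ₀ (AlgHom.normal_bijective _ _ _ σ₀), fun i => ?_⟩
  ext x
  rw [coe_restrictAlgEquivHom_apply]
  exact congrArg Subtype.val (Subalgebra.iSupLift_inclusion (K := fun i => (t i).toSubalgebra)
    (dir := dir) (f := f) (hf := hf) x (le_iSup t i))

end Directed

section Tower

variable {L : ℕ → IntermediateField k Ω} [∀ n, Normal k (L n)]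

theorem restrictAlgEquivHom_inverseLimit_of_le (hL : Monotone L)
    (τ : inverseLimit (fun n => L n ≃ₐ[k] L n) (fun n => restrictAlgEquivHom (hL n.le_succ)))
    {m n : ℕ} (h : m ≤ n) : restrictAlgEquivHom (hL h) (τ.1 n) = τ.1 m := by
  induction n, h using Nat.le_induction with
  | base => ext x; simp [coe_restrictAlgEquivHom_apply]
  | succ n hmn ih => rw [← ih, ← τ.2 n, restrictAlgEquivHom_restrictAlgEquivHom]

theorem coe_inverseLimit_apply_eq (hL : Monotone L)
    (τ : inverseLimit (fun n => L n ≃ₐ[k] L n) (fun n => restrictAlgEquivHom (hL n.le_succ)))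
    {i j : ℕ} {x : Ω} (hi : x ∈ L i) (hj : x ∈ L j) : (τ.1 i ⟨x, hi⟩ : Ω) = τ.1 j ⟨x, hj⟩ := by
  wlog h : i ≤ j generalizing i j
  · exact (this hj hi (le_of_not_ge h)).symm
  rw [← restrictAlgEquivHom_inverseLimit_of_le hL τ h, coe_restrictAlgEquivHom_apply]
  rfl

noncomputable def algEquivEquivInverseLimit (hL : Monotone L) :
    (↥(⨆ n, L n) ≃ₐ[k] ↥(⨆ n, L n)) ≃*
      inverseLimit (fun n => L n ≃ₐ[k] L n) (fun n => restrictAlgEquivHom (hL n.le_succ)) :=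
  .ofBijective
    ((MonoidHom.pi fun n => restrictAlgEquivHom (le_iSup L n)).codRestrict _ fun σ =>
      mem_inverseLimit.mpr fun _ => restrictAlgEquivHom_restrictAlgEquivHom _ _ σ)
    ⟨fun σ τ h => algEquiv_ext_of_directed hL.directed_le fun n => congr_fun congr(($h).1) n,
     fun τ => by
      obtain ⟨σ, hσ⟩ := exists_restrictAlgEquivHom_eq_of_directed hL.directed_le τ.1
        fun _ _ _ => coe_inverseLimit_apply_eq hL τ
      exact ⟨σ, Subtype.ext (funext hσ)⟩⟩

end Tower

end IntermediateField

theorem stmt11_general (H k Ω : Type*) [DivisionRing H] [Field k] [Algebra k H]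
    [Field Ω] [Algebra k Ω]
    (G : ℕ → Type*) [∀ n, Group (G n)]
    (s : ∀ n, G (n + 1) →* G n)
    (Ln : ℕ → IntermediateField k Ω) (hmono : Monotone Ln)
    (hgal : ∀ n, IsGalois k (Ln n))
    (ε : ∀ n, G n ≃* ((Ln n) ≃ₐ[k] (Ln n)))
    (hε : ∀ (n : ℕ) (g : G (n + 1)) (x : Ω) (hx : x ∈ Ln n),
      ((ε n (s n g) ⟨x, hx⟩ : Ln n) : Ω)
        = ((ε (n + 1) g ⟨x, hmono (Nat.le_succ n) hx⟩ : Ln (n + 1)) : Ω))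
    (hdiv : ∀ n, ∀ x : H ⊗[k] (Ln n), x ≠ 0 → IsUnit x) :
    (∀ x : H ⊗[k] ↥(⨆ n, Ln n), x ≠ 0 → IsUnit x) ∧
    Nonempty
      ((fixingAutGroup
          (Algebra.TensorProduct.includeLeftRingHom :
            H →+* H ⊗[k] ↥(⨆ n, Ln n)))
        ≃* (inverseLimit G s)) := by
  have _ n : Normal k (Ln n) := (hgal n).to_normal
  have hunit := IntermediateField.isUnit_tensor_iSup_of_directed hmono.directed_le hdiv
  have := IsDomain.of_isUnit_of_ne_zero (R := H ⊗[k] ↥(⨆ n, Ln n)) hunit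
  have hεres n g :
      ε n (s n g) = IntermediateField.restrictAlgEquivHom (hmono n.le_succ) (ε (n + 1) g) := by
    ext ⟨x, hx⟩
    rw [IntermediateField.coe_restrictAlgEquivHom_apply]
    exact hε n g x hx
  exact ⟨hunit, ⟨tensorAutEquiv.symm.trans <|
    (IntermediateField.algEquivEquivInverseLimit hmono).trans (inverseLimitCongr ε hεres).symm⟩⟩

/-- Let `H` be a division ring, `k` a field contained in the center of `H`,
and `(Gₙ, sₙ)` a complete system of finite groups.  Let `(Lₙ)` be an increasing tower of
finite Galois extensions of `k` (inside a common extension `Ω`), with isomorphisms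
`εₙ : Gₙ ≃* Gal(Lₙ/k)` compatible with the `sₙ` and the restriction epimorphisms, and let
`L = ⋃ₙ Lₙ = ⨆ₙ Lₙ`.  If `H ⊗[k] Lₙ` is a division ring for every `n`, then `M = H ⊗[k] L`
is a division ring and the group of ring automorphisms of `M` fixing `H ⊗ 1` pointwise
(the image of the canonical map `H →+* M`, `h ↦ h ⊗ 1`) is isomorphic to the inverse limit
`lim← Gₙ` of the system `(Gₙ, sₙ)`. -/
theorem stmt11 (H k Ω : Type*) [DivisionRing H] [Field k] [Algebra k H]
    [Field Ω] [Algebra k Ω]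
    (G : ℕ → Type*) [∀ n, Group (G n)] [∀ n, Finite (G n)]
    (s : ∀ n, G (n + 1) →* G n) (hs : ∀ n, Function.Surjective (s n))
    (Ln : ℕ → IntermediateField k Ω) (hmono : Monotone Ln)
    (hgal : ∀ n, IsGalois k (Ln n)) (hfin : ∀ n, FiniteDimensional k (Ln n))
    (ε : ∀ n, G n ≃* ((Ln n) ≃ₐ[k] (Ln n)))
    (hε : ∀ (n : ℕ) (g : G (n + 1)) (x : Ω) (hx : x ∈ Ln n),
      ((ε n (s n g) ⟨x, hx⟩ : Ln n) : Ω)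
        = ((ε (n + 1) g ⟨x, hmono (Nat.le_succ n) hx⟩ : Ln (n + 1)) : Ω))
    (hdiv : ∀ n, ∀ x : H ⊗[k] (Ln n), x ≠ 0 → IsUnit x) :
    (∀ x : H ⊗[k] ↥(⨆ n, Ln n), x ≠ 0 → IsUnit x) ∧
    Nonempty
      ((fixingAutGroup
          (Algebra.TensorProduct.includeLeftRingHom :
            H →+* H ⊗[k] ↥(⨆ n, Ln n)))
        ≃* (inverseLimit G s)) :=
  stmt11_general H k Ω G s Ln hmono hgal ε hε hdiv
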